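/- Let n ≥ 2 and let V ⊆ ℂⁿ be an unbounded subset having a unique tangent cone at infinity C_∞(V). Suppose C_∞(V) lies in an algebraic region of type (k, n), i.e., there exist complementary complex linear subspaces V₁, V₂ of ℂⁿ with dim V₁ = k, dim V₂ = n − k, and positive reals Ã, B such that every v ∈ C_∞(V) satisfies ‖v''‖ ≤ Ã(1 + ‖v'‖)^B (where z = z' + z'' is the decomposition with z' ∈ V₁, z'' ∈ V₂). Then there exists an algebraic region Ω of type (k, n) containing both V and C_∞(V); more precisely, with the same subspaces V₁, V₂ there exist positive reals A and B' ≥ 1 such that every z ∈ V ∪ C_∞(V) satisfies ‖z''‖ ≤ A(1 + ‖z'‖)^{B'}. -/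

import Mathlib

/-- The tangent cone at infinity of `V ⊆ ℂⁿ` with respect to a sequence `t` of
(positive) real numbers tending to `∞`: the set of `v` for which there is a sequence
`x j ∈ V` with `x j / t j → v`. -/
def tangentConeAtInftyWrt (n : ℕ) (V : Set (EuclideanSpace ℂ (Fin n))) (t : ℕ → ℝ) :
    Set (EuclideanSpace ℂ (Fin n)) :=
  {v | ∃ x : ℕ → EuclideanSpace ℂ (Fin n), (∀ j, x j ∈ V) ∧
    Filter.Tendsto (fun j => (t j)⁻¹ • x j) Filter.atTop (nhds v)}

/-!
Put `B' = max B 1` and suppose that no bound `‖z''‖ ≤ A (1 + ‖z'‖)` holds on `V`. Then there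
are `x j ∈ V` with `‖x j''‖ > (j + 1)(1 + ‖x j'‖)`, so `‖x j‖ → ∞` and `x j' / ‖x j‖ → 0`.
By compactness of the unit sphere a subsequence of `x j / ‖x j‖` converges to a unit vector
`v`, which lies in the cone `C` (here uniqueness of the tangent cone is used) and has `v' = 0`.
Uniqueness also makes `C` invariant under positive dilations, so `c • v ∈ C` with `(c • v)' = 0`
for every `c > 0`, and `‖c • v‖ = c` eventually exceeds the bound `Ã (1 + 0)^B` on `C`.
Hence `V` satisfies a linear bound, which is dominated by `A (1 + ‖z'‖)^{B'}` as `B' ≥ 1`.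
-/

open Filter Topology

theorem Submodule.projection_apply_eq_of_mem {R E : Type*} [Ring R] [AddCommGroup E]
    [Module R E] {p q : Submodule R E} (hpq : IsCompl p q) {x y : E} (hy : y ∈ p)
    (hxy : x - y ∈ q) : p.projection q hpq x = y := by
  rw [← add_sub_cancel y x, map_add, projection_apply_of_mem_left hpq hy,
    (projection_apply_eq_zero_iff hpq).2 hxy, add_zero]

section NormedSpace

variable {E : Type*} [NormedAddCommGroup E] [NormedSpace ℝ E]

theorem eq_zero_of_mem_of_map_eq_zero {C : Set E} {P : E →ₗ[ℝ] E} {A B : ℝ}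
    (hsmul : ∀ v ∈ C, ∀ c : ℝ, 0 < c → c • v ∈ C)
    (hcone : ∀ v ∈ C, ‖v - P v‖ ≤ A * (1 + ‖P v‖) ^ B) {v : E} (hv : v ∈ C)
    (hPv : P v = 0) : v = 0 := by
  by_contra hv0
  have hnorm : 0 < ‖v‖ := norm_pos_iff.2 hv0
  set c := (|A| + 1) / ‖v‖
  have hc : 0 < c := by positivity
  have hbound := hcone _ (hsmul v hv c hc)
  rw [map_smul, hPv, smul_zero, sub_zero, norm_zero, add_zero, Real.one_rpow, mul_one,
    norm_smul, Real.norm_of_nonneg hc.le, div_mul_cancel₀ _ hnorm.ne'] at hbound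
  linarith [le_abs_self A]

theorem tendsto_norm_atTop_and_inv_norm_smul_map (P : E →L[ℝ] E) {x : ℕ → E}
    (hx : ∀ j : ℕ, ((j : ℝ) + 1) * (1 + ‖P (x j)‖) < ‖x j - P (x j)‖) :
    Tendsto (fun j => ‖x j‖) atTop atTop ∧
      Tendsto (fun j => ‖x j‖⁻¹ • P (x j)) atTop (𝓝 0) := by
  set K := 1 + ‖P‖
  have hK : ∀ j : ℕ, ((j : ℝ) + 1) * (1 + ‖P (x j)‖) < K * ‖x j‖ := fun j =>
    calc ((j : ℝ) + 1) * (1 + ‖P (x j)‖) < ‖x j - P (x j)‖ := hx j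
      _ ≤ ‖x j‖ + ‖P‖ * ‖x j‖ := (norm_sub_le _ _).trans (by gcongr; exact P.le_opNorm _)
      _ = K * ‖x j‖ := by ring
  have hKpos : 0 < K := by positivity
  have hxpos : ∀ j, 0 < ‖x j‖ := fun j =>
    pos_of_mul_pos_right ((by positivity : (0 : ℝ) < _).trans (hK j)) hKpos.le
  have htop : Tendsto (fun j : ℕ => (j : ℝ) + 1) atTop atTop :=
    tendsto_atTop_add_const_right _ 1 tendsto_natCast_atTop_atTop
  constructor
  · refine tendsto_atTop_mono (fun j => ?_) (htop.atTop_div_const hKpos)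
    rw [div_le_iff₀' hKpos]
    nlinarith [hK j, norm_nonneg (P (x j))]
  · refine squeeze_zero_norm (fun j => ?_) ((tendsto_const_nhds (x := K)).div_atTop htop)
    rw [norm_smul, norm_inv, norm_norm, inv_mul_le_iff₀ (hxpos j), mul_div_assoc',
      le_div_iff₀ (by positivity)]
    nlinarith [hK j]

end NormedSpace

section TangentCone

variable {n : ℕ} {V C : Set (EuclideanSpace ℂ (Fin n))}

def HasTangentConeAtInfty (n : ℕ) (V C : Set (EuclideanSpace ℂ (Fin n))) : Prop :=
  ∀ t : ℕ → ℝ, (∀ j, 0 < t j) → Tendsto t atTop atTop → tangentConeAtInftyWrt n V t = C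

theorem smul_mem_tangentConeAtInftyWrt {t : ℕ → ℝ} {v : EuclideanSpace ℂ (Fin n)}
    (hv : v ∈ tangentConeAtInftyWrt n V t) (c : ℝ) :
    c • v ∈ tangentConeAtInftyWrt n V (fun j => c⁻¹ * t j) := by
  obtain ⟨x, hxV, hx⟩ := hv
  refine ⟨x, hxV, (hx.const_smul c).congr fun j => ?_⟩
  rw [smul_smul, mul_inv, inv_inv]

theorem HasTangentConeAtInfty.smul_mem (hC : HasTangentConeAtInfty n V C)
    {v : EuclideanSpace ℂ (Fin n)} (hv : v ∈ C) {c : ℝ} (hc : 0 < c) : c • v ∈ C := by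
  have hpos : ∀ j : ℕ, (0 : ℝ) < j + 1 := fun j => by positivity
  have htop : Tendsto (fun j : ℕ => (j : ℝ) + 1) atTop atTop :=
    tendsto_atTop_add_const_right _ 1 tendsto_natCast_atTop_atTop
  rw [← hC _ hpos htop] at hv
  rw [← hC _ (fun j => mul_pos (inv_pos.2 hc) (hpos j)) (htop.const_mul_atTop (inv_pos.2 hc))]
  exact smul_mem_tangentConeAtInftyWrt hv c

theorem HasTangentConeAtInfty.exists_tendsto_inv_norm_smul (hC : HasTangentConeAtInfty n V C)
    {x : ℕ → EuclideanSpace ℂ (Fin n)} (hxV : ∀ j, x j ∈ V) (hx0 : ∀ j, x j ≠ 0)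
    (hx : Tendsto (fun j => ‖x j‖) atTop atTop) :
    ∃ v ∈ C, ‖v‖ = 1 ∧ ∃ φ : ℕ → ℕ, StrictMono φ ∧
      Tendsto (fun j => ‖x (φ j)‖⁻¹ • x (φ j)) atTop (𝓝 v) := by
  obtain ⟨v, hv, φ, hφ, hlim⟩ :=
    (isCompact_sphere (0 : EuclideanSpace ℂ (Fin n)) 1).tendsto_subseq
      (x := fun j => ‖x j‖⁻¹ • x j) fun j => by
        simpa using norm_smul_inv_norm (𝕜 := ℝ) (hx0 j)
  refine ⟨v, ?_, by simpa using hv, φ, hφ, hlim⟩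
  rw [← hC _ (fun j => norm_pos_iff.2 (hx0 _)) (hx.comp hφ.tendsto_atTop)]
  exact ⟨fun j => x (φ j), fun j => hxV _, hlim⟩

theorem HasTangentConeAtInfty.exists_linear_bound (hC : HasTangentConeAtInfty n V C)
    (P : EuclideanSpace ℂ (Fin n) →L[ℝ] EuclideanSpace ℂ (Fin n)) {A B : ℝ}
    (hcone : ∀ v ∈ C, ‖v - P v‖ ≤ A * (1 + ‖P v‖) ^ B) :
    ∃ A' > 0, ∀ z ∈ V, ‖z - P z‖ ≤ A' * (1 + ‖P z‖) := by
  by_contra! h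
  choose x hxV hx using fun j : ℕ => h ((j : ℝ) + 1) (by positivity)
  have hx0 : ∀ j, x j ≠ 0 := fun j hj => by
    have := hx j
    simp only [hj, map_zero, sub_zero, norm_zero, add_zero, mul_one] at this
    linarith
  obtain ⟨hxtop, hPx⟩ := tendsto_norm_atTop_and_inv_norm_smul_map P hx
  obtain ⟨v, hvC, hv1, φ, hφ, hv⟩ := hC.exists_tendsto_inv_norm_smul hxV hx0 hxtop
  have hPv : P v = 0 := tendsto_nhds_unique ((P.continuous.tendsto v).comp hv)
    (by simpa only [Function.comp_def, map_smul] using hPx.comp hφ.tendsto_atTop)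
  have hv0 := eq_zero_of_mem_of_map_eq_zero (fun w hw c hc => hC.smul_mem hw hc) hcone hvC hPv
  simp [hv0] at hv1

end TangentCone

theorem statement2_general (n : ℕ)
    (V₁ V₂ : Submodule ℂ (EuclideanSpace ℂ (Fin n))) (hcompl : IsCompl V₁ V₂)
    (π : EuclideanSpace ℂ (Fin n) → EuclideanSpace ℂ (Fin n))
    (hπ : ∀ z, π z ∈ V₁ ∧ z - π z ∈ V₂)
    (V : Set (EuclideanSpace ℂ (Fin n)))
    (C : Set (EuclideanSpace ℂ (Fin n)))
    (hC : ∀ t : ℕ → ℝ, (∀ j, 0 < t j) → Filter.Tendsto t Filter.atTop Filter.atTop →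
        tangentConeAtInftyWrt n V t = C)
    (Atilde B : ℝ)
    (hcone : ∀ v ∈ C, ‖v - π v‖ ≤ Atilde * (1 + ‖π v‖) ^ B) :
    ∃ A : ℝ, 0 < A ∧ ∃ B' : ℝ, 1 ≤ B' ∧
      ∀ z ∈ V ∪ C, ‖z - π z‖ ≤ A * (1 + ‖π z‖) ^ B' := by
  set P := (LinearMap.toContinuousLinearMap (V₁.projection V₂ hcompl)).restrictScalars ℝ
  obtain rfl : π = P := funext fun z =>
    (Submodule.projection_apply_eq_of_mem hcompl (hπ z).1 (hπ z).2).symm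
  obtain ⟨A, hA, hAV⟩ := HasTangentConeAtInfty.exists_linear_bound hC P hcone
  refine ⟨max A Atilde, lt_max_of_lt_left hA, max B 1, le_max_right _ _, ?_⟩
  have hbase : ∀ z, 1 ≤ 1 + ‖P z‖ := fun z => le_add_of_nonneg_right (norm_nonneg _)
  rintro z (hz | hz)
  · calc ‖z - P z‖ ≤ A * (1 + ‖P z‖) := hAV z hz
      _ ≤ max A Atilde * (1 + ‖P z‖) ^ max B 1 := by
        gcongr
        · exact le_max_left _ _
        · exact Real.self_le_rpow_of_one_le (hbase z) (le_max_right _ _)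
  · calc ‖z - P z‖ ≤ Atilde * (1 + ‖P z‖) ^ B := hcone z hz
      _ ≤ max A Atilde * (1 + ‖P z‖) ^ max B 1 := by
        gcongr
        · exact le_max_right _ _
        · exact hbase z
        · exact le_max_left _ _

/-- Let `V ⊆ ℂⁿ` be an unbounded subset with a unique tangent cone
at infinity `C`.  Suppose `C` lies in an algebraic region of type `(k, n)` given by
complementary subspaces `V₁, V₂` with `dim V₁ = k`, `dim V₂ = n - k`, and constants
`Atilde, B > 0`: every `v ∈ C` satisfies `‖v''‖ ≤ Atilde(1 + ‖v'‖)^B`, where `π : z ↦ z'` is the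
projection onto `V₁` along `V₂` and `z'' = z - π z`.  Then with the same `V₁, V₂`,
there exist `A > 0` and `B' ≥ 1` such that every `z ∈ V ∪ C` satisfies
`‖z''‖ ≤ A(1 + ‖z'‖)^{B'}`. -/
theorem statement2 (n k : ℕ) (hn : 2 ≤ n)
    (V₁ V₂ : Submodule ℂ (EuclideanSpace ℂ (Fin n))) (hcompl : IsCompl V₁ V₂)
    (hk₁ : Module.finrank ℂ V₁ = k) (hk₂ : Module.finrank ℂ V₂ = n - k)
    (π : EuclideanSpace ℂ (Fin n) → EuclideanSpace ℂ (Fin n))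
    (hπ : ∀ z, π z ∈ V₁ ∧ z - π z ∈ V₂)
    (V : Set (EuclideanSpace ℂ (Fin n))) (hV : ¬ Bornology.IsBounded V)
    (C : Set (EuclideanSpace ℂ (Fin n)))
    (hC : ∀ t : ℕ → ℝ, (∀ j, 0 < t j) → Filter.Tendsto t Filter.atTop Filter.atTop →
        tangentConeAtInftyWrt n V t = C)
    (Atilde B : ℝ) (hAtilde : 0 < Atilde) (hB : 0 < B)
    (hcone : ∀ v ∈ C, ‖v - π v‖ ≤ Atilde * (1 + ‖π v‖) ^ B) :
    ∃ A : ℝ, 0 < A ∧ ∃ B' : ℝ, 1 ≤ B' ∧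
      ∀ z ∈ V ∪ C, ‖z - π z‖ ≤ A * (1 + ‖π z‖) ^ B' :=
  statement2_general n V₁ V₂ hcompl π hπ V C hC Atilde B hcone
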